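/- (Lemma 1, parts 3–4: per-state subsequences are urn sequences, hence exchangeable.) Assume the reinforced urn process is recurrent: μ(v_{i,n} < ∞ for all i ∈ E and all n ≥ 1) = 1, and define L_{i,n} = L_{v_{i,n}+1}, T_{i,n} = T_{v_{i,n}}. Then for each i ∈ E: the sequence (L_{i,n})_{n≥1} has the law of the generalized Pólya urn sequence with initial composition m^i (i.e. μ(L_{i,1} = j_1, …, L_{i,k} = j_k) = ∏_{j∈E} ∏_{h=0}^{k_j−1}(m^i({j})+h) / ∏_{h=0}^{k−1}(m^i(E)+h), with k_j = #{r ≤ k : j_r = j}), and the sequence (T_{i,n})_{n≥1} has the law of the beta-Stacy urn system with parameters (c^i, F0^i). In particular, for every k ≥ 1 and every permutation σ of {1,…,k}, the law of (L_{i,σ(1)},…,L_{i,σ(k)}) equals the law of (L_{i,1},…,L_{i,k}) and the law of (T_{i,σ(1)},…,T_{i,σ(k)}) equals the law of (T_{i,1},…,T_{i,k}): both sequences are exchangeable. -/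

import Mathlib

open MeasureTheory

/-! # Setup (reinforced urn process)

`E` is a nonempty countable state space with a fixed starting state `l₀`.  For each
`i ∈ E`: `m^i` is a measure on `E` with `m^i({i}) = 0` and `0 < m^i(E) < ∞` (mass
function `m i : E → ℝ≥0∞`); `c^i(s) > 0`; `F0^i` is a probability mass function on `ℕ+`
with `F0^i({s}) > 0` for all `s`, and `F0^i([s,∞)) = F0^i({s}) + F0^i((s,∞))`.

`μ` is the law on `(E × ℕ+)^ℕ` of the reinforced urn process `{(L_k, T_k)}_{k≥0}`:
`L_0 = l₀` (hypothesis `h0`); conditionally on `(L_{0:k}, T_{0:k-1})` with `L_k = i`, the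
holding time `T_k` is drawn from the beta-Stacy urn predictive of state `i` and,
independently, the next state `L_{k+1}` from the Pólya urn predictive of state `i`
(hypothesis `hstep`).

`v_{i,n}` (`visit i n`, `n` counted from `0`) is the index of the `(n+1)`-th visit of
`(L_k)` to `i`; recurrence means that a.s. every state is visited infinitely often; and
`L_{i,n} = L_{v_{i,n}+1}`, `T_{i,n} = T_{v_{i,n}}`. -/

instance : MeasurableSpace ℕ+ := ⊤

variable {E : Type*}

/-- `F0^i((s,∞))`. -/
noncomputable def survF0 (F0 : E → ℕ+ → ENNReal) (i : E) (s : ℕ+) : ENNReal :=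
  ∑' r : ℕ+, if s < r then F0 i r else 0

/-- `d^i_s = #{h < k : L_h = i, T_h = s}` along a history. -/
noncomputable def dHist [DecidableEq E] (l : ℕ → E) (tv : ℕ → ℕ+) (k : ℕ) (i : E)
    (s : ℕ+) : ℕ :=
  ((Finset.range k).filter (fun h => l h = i ∧ tv h = s)).card

/-- `w^i_s = #{h < k : L_h = i, T_h > s}` along a history. -/
noncomputable def wHist [DecidableEq E] (l : ℕ → E) (tv : ℕ → ℕ+) (k : ℕ) (i : E)
    (s : ℕ+) : ℕ :=
  ((Finset.range k).filter (fun h => l h = i ∧ s < tv h)).card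

/-- The index of the `(n+1)`-th visit of `(L_k)_{k≥0}` to state `i` (so `visit i 0` is
the first visit; junk value `sInf ∅ = 0` if fewer than `n+1` visits occur). -/
noncomputable def visit [DecidableEq E] (i : E) (n : ℕ) (ω : ℕ → E × ℕ+) : ℕ :=
  sInf {k | (ω k).1 = i ∧ ((Finset.range k).filter (fun h => (ω h).1 = i)).card = n}

/-- `L_{i,n} = L_{v_{i,n}+1}`, the state visited immediately after the `(n+1)`-th visit
to `i` is over. -/
noncomputable def visitNext [DecidableEq E] (i : E) (n : ℕ) (ω : ℕ → E × ℕ+) : E :=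
  (ω (visit i n ω + 1)).1

/-- `T_{i,n} = T_{v_{i,n}}`, the length of the `(n+1)`-th visit to `i`. -/
noncomputable def visitHold [DecidableEq E] (i : E) (n : ℕ) (ω : ℕ → E × ℕ+) : ℕ+ :=
  (ω (visit i n ω)).2

/-- The ascending factorial `x^{(k)} = x (x+1) ⋯ (x+k-1)`. -/
noncomputable def ascFac (x : ENNReal) (k : ℕ) : ENNReal :=
  ∏ h ∈ Finset.range k, (x + h)

/-!
At its `n`-th visit to `i` the process consults the urns of `i`, reinforced by exactly the draws
made at the earlier visits to `i`. So, given the path up to the time `K` of that visit, the next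
state and the holding time follow the Pólya and beta-Stacy predictives of the first `n` marks of
the subsequence. The event "the `n`-th visit is at `K` and the marks so far are `a 0, …, a (n-1)`"
is determined by the history up to `K`, and under recurrence these events partition the event on
the marks, so summing over `K` factorises the law of the marks into predictives. Multiplying them
out gives the urn laws; for the holding times this works level by level, since observing `τ`
multiplies the level-`s` factor `a^{(d)} b^{(w)} / (a + b)^{(d + w)}` by the survival factor of
the predictive if `s < τ` and by its hazard if `s = τ`. The laws depend on the marks only through
their counts, hence exchangeability.
-/

open Finset
open scoped ENNReal

section Fibres

variable {Ω Y : Type*} [MeasurableSpace Ω] [Countable Y] {f : Ω → Y}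

lemma measure_eq_tsum_inter_preimage_singleton (μ : Measure Ω)
    (hf : ∀ y, MeasurableSet (f ⁻¹' {y})) (S : Set Ω) :
    μ S = ∑' y, μ (S ∩ f ⁻¹' {y}) := by
  have h := tsum_measure_preimage_singleton (μ := μ.restrict S) Set.countable_univ
    fun y _ => hf y
  rw [Set.preimage_univ, Measure.restrict_apply_univ,
    tsum_univ fun y => μ.restrict S (f ⁻¹' {y})] at h
  rw [← h]
  exact tsum_congr fun y => by rw [Measure.restrict_apply (hf y), Set.inter_comm]

lemma measure_preimage_inter_eq_mul (μ : Measure Ω) (hf : ∀ y, MeasurableSet (f ⁻¹' {y}))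
    (B : Set Y) (V : Set Ω) (q : ℝ≥0∞) (h : ∀ y ∈ B, μ (f ⁻¹' {y} ∩ V) = μ (f ⁻¹' {y}) * q) :
    μ (f ⁻¹' B ∩ V) = μ (f ⁻¹' B) * q := by
  have hB : MeasurableSet (f ⁻¹' B) := by
    rw [← Set.biUnion_preimage_singleton]
    exact .biUnion B.to_countable fun y _ => hf y
  rw [← Measure.restrict_apply hB, ← tsum_measure_preimage_singleton B.to_countable fun y _ => hf y,
    ← tsum_measure_preimage_singleton B.to_countable fun y _ => hf y, ← ENNReal.tsum_mul_right]
  exact tsum_congr fun y => by rw [Measure.restrict_apply (hf y), h y y.2]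

end Fibres

section Counting

lemma Nat.count_congr_of_lt {p q : ℕ → Prop} [DecidablePred p] [DecidablePred q] {K : ℕ}
    (h : ∀ k < K, (p k ↔ q k)) : Nat.count p K = Nat.count q K := by
  simp only [Nat.count_eq_card_filter_range]
  exact congrArg card (filter_congr fun k hk => h k (mem_range.1 hk))

lemma Nat.count_and_eq_count_count {p Q R : ℕ → Prop} [DecidablePred p] [DecidablePred Q]
    [DecidablePred R] {K : ℕ} (h : ∀ k < K, p k → (Q k ↔ R (Nat.count p k))) :
    Nat.count (fun k => p k ∧ Q k) K = Nat.count R (Nat.count p K) := by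
  induction K with
  | zero => simp
  | succ K ih =>
    rw [Nat.count_succ, Nat.count_succ, ih fun k hk => h k (by omega)]
    by_cases hp : p K
    · simp [hp, Nat.count_succ, h K (by omega) hp]
    · simp [hp]

end Counting

section Finite

lemma Fin.exists_eq_comp_val {α : Type*} (x : α) {n : ℕ} (v : Fin n → α) :
    ∃ a : ℕ → α, v = fun r : Fin n => a r :=
  ⟨fun r => if h : r < n then v ⟨r, h⟩ else x, funext fun r => by simp⟩

lemma card_filter_univ_fin_eq_count (p : ℕ → Prop) [DecidablePred p] (n : ℕ) :
    #{r : Fin n | p r} = Nat.count p n := by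
  rw [Nat.count_eq_card_filter_range, card_filter, card_filter,
    Fin.sum_univ_eq_sum_range (fun r => if p r then 1 else 0)]

lemma card_filter_comp_perm {ι : Type*} [Fintype ι] (σ : Equiv.Perm ι) (p : ι → Prop)
    [DecidablePred p] : #{r | p (σ r)} = #{r | p r} :=
  card_equiv σ (by simp)

end Finite

section Polya

lemma ascFac_succ (x : ℝ≥0∞) (k : ℕ) : ascFac x (k + 1) = ascFac x k * (x + k) :=
  prod_range_succ _ _

lemma prod_range_add_count_eq_prod_ascFac {α : Type*} [DecidableEq α] (f : α → ℝ≥0∞)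
    (a : ℕ → α) (T : Finset α) {n : ℕ} (hT : ∀ r < n, a r ∈ T) :
    ∏ r ∈ range n, (f (a r) + Nat.count (fun r' => a r' = a r) r) =
      ∏ e ∈ T, ascFac (f e) (Nat.count (fun r => a r = e) n) := by
  induction n with
  | zero => simp [ascFac]
  | succ n ih =>
    have hsucc : ∀ e, ascFac (f e) (Nat.count (fun r => a r = e) (n + 1)) =
        ascFac (f e) (Nat.count (fun r => a r = e) n) *
          if a n = e then f e + Nat.count (fun r => a r = e) n else 1 := by
      intro e
      rw [Nat.count_succ]
      split_ifs <;> simp [ascFac_succ]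
    rw [prod_range_succ, ih fun r hr => hT r (by omega)]
    simp only [hsucc, prod_mul_distrib, prod_ite_eq, if_pos (hT n (by omega))]

lemma prod_range_add_count_div_eq {α : Type*} [DecidableEq α] (f : α → ℝ≥0∞) {M : ℝ≥0∞}
    (hM : M ≠ 0) (a : ℕ → α) (n : ℕ) :
    ∏ r ∈ range n, (f (a r) + Nat.count (fun r' => a r' = a r) r) / (M + r) =
      (∏' e, ascFac (f e) (Nat.count (fun r => a r = e) n)) / ∏ h ∈ range n, (M + h) := by
  rw [ENNReal.prod_div_distrib_of_ne_zero fun r _ => by simp [hM],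
    prod_range_add_count_eq_prod_ascFac f a ((range n).image a)
      fun r hr => mem_image_of_mem a (mem_range.2 hr),
    tprod_eq_prod fun e he => ?_]
  rw [Nat.count_of_forall_not fun r hr hre => he (mem_image.2 ⟨r, mem_range.2 hr, hre⟩)]
  simp [ascFac]

end Polya

section BetaStacy

lemma ENNReal.one_sub_div_add {x y : ℝ≥0∞} (hx : x ≠ ⊤) (hy : y ≠ ⊤) (h : x + y ≠ 0) :
    1 - x / (x + y) = y / (x + y) := by
  refine ENNReal.sub_eq_of_eq_add (ENNReal.div_ne_top hx h) ?_
  rw [ENNReal.div_add_div_same, add_comm y, ENNReal.div_self h (ENNReal.add_ne_top.2 ⟨hx, hy⟩)]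

lemma ascFac_ne_zero {x : ℝ≥0∞} (hx : x ≠ 0) (k : ℕ) : ascFac x k ≠ 0 :=
  prod_ne_zero_iff.2 fun _ _ h => hx (add_eq_zero.1 h).1

lemma ascFac_ne_top {x : ℝ≥0∞} (hx : x ≠ ⊤) (k : ℕ) : ascFac x k ≠ ⊤ :=
  ENNReal.prod_ne_top fun _ _ => ENNReal.add_ne_top.2 ⟨hx, ENNReal.natCast_ne_top _⟩

noncomputable def stacyLevel (a b : ℝ≥0∞) (d w : ℕ) : ℝ≥0∞ :=
  ascFac a d * ascFac b w / ascFac (a + b) (d + w)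

section Level

variable {a b : ℝ≥0∞} (ha0 : a ≠ 0) (ha : a ≠ ⊤) (hb : b ≠ ⊤)
include ha0 ha hb

lemma stacyLevel_mul_div {d w : ℕ} (x : ℝ≥0∞) :
    ascFac a d * ascFac b w * x / ascFac (a + b) (d + w + 1) =
      stacyLevel a b d w * (x / (a + b + d + w)) := by
  have hab0 : a + b ≠ 0 := by simp [ha0]
  have habtop : a + b ≠ ⊤ := ENNReal.add_ne_top.2 ⟨ha, hb⟩
  rw [ascFac_succ, stacyLevel, ENNReal.mul_div_mul_comm (.inl (ascFac_ne_zero hab0 _))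
    (.inl (ascFac_ne_top habtop _))]
  push_cast
  ring_nf

lemma stacyLevel_succ_left (d w : ℕ) :
    stacyLevel a b (d + 1) w = stacyLevel a b d w * ((a + d) / (a + b + d + w)) := by
  rw [← stacyLevel_mul_div ha0 ha hb, stacyLevel, ascFac_succ, add_right_comm d 1 w]
  ring_nf

lemma stacyLevel_succ_right (d w : ℕ) :
    stacyLevel a b d (w + 1) = stacyLevel a b d w * ((b + w) / (a + b + d + w)) := by
  rw [← stacyLevel_mul_div ha0 ha hb, stacyLevel, ascFac_succ, ← add_assoc]
  ring_nf

end Level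

section Predictive

variable (a b : ℕ+ → ℝ≥0∞) (d w : ℕ+ → ℕ)

/-- Probability of `T = s` given `T ≥ s` for the beta-Stacy urn with weights `a s` (`= s`) and
`b s` (`> s`) reinforced by the counts `d s` (`= s`) and `w s` (`> s`). -/
noncomputable def stacyHazard (s : ℕ+) : ℝ≥0∞ :=
  (a s + d s) / (a s + b s + d s + w s)

noncomputable def stacySurvival (t : ℕ) : ℝ≥0∞ :=
  ∏ s ∈ range t, (1 - stacyHazard a b d w s.succPNat)

noncomputable def stacyPredictive (τ : ℕ+) : ℝ≥0∞ :=
  stacySurvival a b d w ((τ : ℕ) - 1) - stacySurvival a b d w τ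

lemma stacyHazard_le_one (s : ℕ+) : stacyHazard a b d w s ≤ 1 :=
  ENNReal.div_le_of_le_mul <| by
    rw [one_mul, add_right_comm _ _ (d s : ℝ≥0∞)]
    exact le_self_add.trans le_self_add

lemma stacySurvival_le_one (t : ℕ) : stacySurvival a b d w t ≤ 1 :=
  prod_le_one' fun _ _ => tsub_le_self

lemma stacyPredictive_succPNat (t : ℕ) :
    stacyPredictive a b d w t.succPNat =
      stacySurvival a b d w t * stacyHazard a b d w t.succPNat := by
  have hS : stacySurvival a b d w t ≠ ⊤ :=
    ((stacySurvival_le_one a b d w t).trans_lt ENNReal.one_lt_top).ne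
  have hsucc : stacySurvival a b d w (t + 1) =
      stacySurvival a b d w t * (1 - stacyHazard a b d w t.succPNat) :=
    prod_range_succ _ _
  calc stacyPredictive a b d w t.succPNat
      = stacySurvival a b d w t * 1 -
          stacySurvival a b d w t * (1 - stacyHazard a b d w t.succPNat) := by
        rw [stacyPredictive, Nat.succPNat_coe, Nat.succ_sub_one, hsucc, mul_one]
    _ = stacySurvival a b d w t * (1 - (1 - stacyHazard a b d w t.succPNat)) :=
      (ENNReal.mul_sub fun _ _ => hS).symm
    _ = stacySurvival a b d w t * stacyHazard a b d w t.succPNat := by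
      rw [ENNReal.sub_sub_cancel ENNReal.one_ne_top (stacyHazard_le_one a b d w _)]

/-- The factor by which the weight of level `s` changes when `τ` is observed. -/
noncomputable def stacyStep (τ s : ℕ+) : ℝ≥0∞ :=
  if s < τ then 1 - stacyHazard a b d w s else if s = τ then stacyHazard a b d w s else 1

lemma prod_range_stacyStep {τ : ℕ+} {N : ℕ} (hτN : (τ : ℕ) ≤ N) :
    ∏ s ∈ range N, stacyStep a b d w τ s.succPNat = stacyPredictive a b d w τ := by
  obtain ⟨t, rfl⟩ : ∃ t : ℕ, t.succPNat = τ := ⟨_, PNat.succPNat_natPred τ⟩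
  have hhigh : ∏ s ∈ Ico (t + 1) N, stacyStep a b d w t.succPNat s.succPNat = 1 :=
    prod_eq_one fun s hs => by
      have := (mem_Ico.1 hs).1
      simp [stacyStep, Nat.succPNat_lt_succPNat, Nat.succPNat_inj, show ¬s < t by omega,
        show s ≠ t by omega]
  have hlow : ∀ s ∈ range t, stacyStep a b d w t.succPNat s.succPNat =
      1 - stacyHazard a b d w s.succPNat := fun s hs => by
    simp [stacyStep, Nat.succPNat_lt_succPNat, mem_range.1 hs]
  have htN : t + 1 ≤ N := by simpa using hτN
  rw [← prod_range_mul_prod_Ico _ htN, hhigh, mul_one, prod_range_succ, prod_congr rfl hlow,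
    stacyPredictive_succPNat, stacySurvival]
  simp [stacyStep]

variable {a b}

lemma stacyLevel_update (ha0 : ∀ s, a s ≠ 0) (ha : ∀ s, a s ≠ ⊤) (hb : ∀ s, b s ≠ ⊤)
    (τ s : ℕ+) :
    stacyLevel (a s) (b s) (d s + if τ = s then 1 else 0) (w s + if s < τ then 1 else 0) =
      stacyLevel (a s) (b s) (d s) (w s) * stacyStep a b d w τ s := by
  rcases lt_trichotomy s τ with hlt | rfl | hgt
  · have hsplit : a s + b s + d s + w s = (a s + d s) + (b s + w s) := by ring
    rw [if_neg hlt.ne', if_pos hlt, stacyStep, if_pos hlt, stacyHazard, add_zero,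
      stacyLevel_succ_right (ha0 s) (ha s) (hb s), hsplit,
      ENNReal.one_sub_div_add (by simp [ha s]) (by simp [hb s]) (by simp [ha0 s])]
  · simp [stacyStep, stacyLevel_succ_left (ha0 s) (ha s) (hb s), stacyHazard]
  · simp [stacyStep, hgt.ne, hgt.ne', not_lt_of_gt hgt]

end Predictive

variable {a b : ℕ+ → ℝ≥0∞}

lemma tprod_stacyLevel_eq_prod_range (τ : ℕ → ℕ+) {n N : ℕ} (hN : ∀ r < n, (τ r : ℕ) ≤ N) :
    ∏' s : ℕ+, stacyLevel (a s) (b s) (Nat.count (τ · = s) n) (Nat.count (s < τ ·) n) =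
      ∏ s ∈ range N, stacyLevel (a s.succPNat) (b s.succPNat)
        (Nat.count (τ · = s.succPNat) n) (Nat.count (s.succPNat < τ ·) n) := by
  rw [← Equiv.pnatEquivNat.symm.tprod_eq, tprod_eq_prod fun s hs => ?_]
  · rfl
  have hNs : N < s + 1 := by simpa using hs
  have hτ : ∀ r < n, (τ r : ℕ) < s + 1 := fun r hr => (hN r hr).trans_lt hNs
  rw [Nat.count_of_forall_not fun r hr (h : τ r = _) => by simpa [h] using hτ r hr,
    Nat.count_of_forall_not fun r hr (h : _ < τ r) => by
      simpa using (PNat.coe_lt_coe _ _ |>.2 h).trans (hτ r hr)]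
  simp [stacyLevel, ascFac]

variable (ha0 : ∀ s, a s ≠ 0) (ha : ∀ s, a s ≠ ⊤) (hb : ∀ s, b s ≠ ⊤)
include ha0 ha hb

lemma prod_stacyPredictive_eq_prod_range (τ : ℕ → ℕ+) {n N : ℕ}
    (hN : ∀ r < n, (τ r : ℕ) ≤ N) :
    ∏ r ∈ range n, stacyPredictive a b (fun s => Nat.count (τ · = s) r)
        (fun s => Nat.count (s < τ ·) r) (τ r) =
      ∏ s ∈ range N, stacyLevel (a s.succPNat) (b s.succPNat)
        (Nat.count (τ · = s.succPNat) n) (Nat.count (s.succPNat < τ ·) n) := by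
  induction n with
  | zero => simp [stacyLevel, ascFac]
  | succ n ih =>
    rw [prod_range_succ, ih fun r hr => hN r (by omega),
      ← prod_range_stacyStep _ _ _ _ (hN n (by omega)), ← prod_mul_distrib]
    refine prod_congr rfl fun s _ => ?_
    rw [Nat.count_succ, Nat.count_succ]
    exact (stacyLevel_update (fun s => Nat.count (τ · = s) n) (fun s => Nat.count (s < τ ·) n)
      ha0 ha hb (τ n) s.succPNat).symm

lemma prod_stacyPredictive_eq_tprod (τ : ℕ → ℕ+) (n : ℕ) :
    ∏ r ∈ range n, stacyPredictive a b (fun s => Nat.count (τ · = s) r)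
        (fun s => Nat.count (s < τ ·) r) (τ r) =
      ∏' s : ℕ+, stacyLevel (a s) (b s) (Nat.count (τ · = s) n) (Nat.count (s < τ ·) n) := by
  have hN : ∀ r < n, (τ r : ℕ) ≤ ∑ r ∈ range n, (τ r : ℕ) := fun r hr =>
    single_le_sum (f := fun r => (τ r : ℕ)) (fun _ _ => Nat.zero_le _) (mem_range.2 hr)
  rw [prod_stacyPredictive_eq_prod_range ha0 ha hb τ hN, tprod_stacyLevel_eq_prod_range τ hN]

end BetaStacy

section History

/-- What the predictive rule at step `K` conditions on: `L_0, …, L_K` and `T_0, …, T_{K-1}`. -/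
def history (K : ℕ) (ω : ℕ → E × ℕ+) : (Fin (K + 1) → E) × (Fin K → ℕ+) :=
  (fun h => (ω h).1, fun h => (ω h).2)

lemma history_eq_history_iff {K : ℕ} {ω ω' : ℕ → E × ℕ+} :
    history K ω = history K ω' ↔
      (∀ h ≤ K, (ω h).1 = (ω' h).1) ∧ ∀ h < K, (ω h).2 = (ω' h).2 := by
  simp [history, funext_iff, Fin.forall_iff]

lemma preimage_image_history {K : ℕ} {S : Set (ℕ → E × ℕ+)}
    (hS : ∀ ω ω', history K ω = history K ω' → ω ∈ S → ω' ∈ S) :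
    history K ⁻¹' (history K '' S) = S :=
  Set.Subset.antisymm (fun _ ⟨ω, hω, heq⟩ => hS ω _ heq hω) (Set.subset_preimage_image _ _)

lemma preimage_history_singleton (K : ℕ) (ω₀ : ℕ → E × ℕ+) :
    history K ⁻¹' {history K ω₀} =
      {ω | (∀ h ≤ K, (ω h).1 = (ω₀ h).1) ∧ ∀ h < K, (ω h).2 = (ω₀ h).2} := by
  ext ω
  simp [history_eq_history_iff]

variable [MeasurableSpace E]

lemma measurable_history (K : ℕ) : Measurable (history (E := E) K) :=
  (measurable_pi_lambda _ fun _ => (measurable_pi_apply _).fst).prodMk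
    (measurable_pi_lambda _ fun _ => (measurable_pi_apply _).snd)

variable [MeasurableSingletonClass E] [Countable E]

lemma measurableSet_preimage_history (K : ℕ) (B : Set ((Fin (K + 1) → E) × (Fin K → ℕ+))) :
    MeasurableSet (history K ⁻¹' B) :=
  measurable_history K B.to_countable.measurableSet

lemma measurableSet_recurrent :
    MeasurableSet {ω : ℕ → E × ℕ+ | ∀ i : E, {k | (ω k).1 = i}.Infinite} := by
  have : {ω : ℕ → E × ℕ+ | ∀ i : E, {k | (ω k).1 = i}.Infinite} =
      ⋂ (i : E) (N : ℕ), ⋃ (k : ℕ) (_ : N ≤ k), {ω | (ω k).1 = i} := by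
    ext ω
    simp [← Nat.frequently_atTop_iff_infinite, Filter.frequently_atTop]
  rw [this]
  exact .iInter fun i => .iInter fun _ => .iUnion fun k => .iUnion fun _ =>
    (measurable_pi_apply k).fst (measurableSet_singleton i)

end History

section Predictive

lemma survF0_le_one {F0 : E → ℕ+ → ℝ≥0∞} {i : E} (h : ∑' s, F0 i s = 1) (s : ℕ+) :
    survF0 F0 i s ≤ 1 :=
  h ▸ ENNReal.tsum_le_tsum fun r => by split_ifs <;> simp

variable [DecidableEq E]

noncomputable def polyaPredictive (m : E → E → ℝ≥0∞) (l : ℕ → E) (k : ℕ) (j : E) : ℝ≥0∞ :=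
  (m (l k) j + ((range k).filter (fun h => l h = l k ∧ l (h + 1) = j)).card) /
    ((∑' e, m (l k) e) + ((range k).filter (fun h => l h = l k)).card)

/-- `P(T_k > t)` given `L_0, …, L_k = l 0, …, l k` and `T_0, …, T_{k-1} = tv 0, …, tv (k-1)`. -/
noncomputable def holdSurvival (c F0 : E → ℕ+ → ℝ≥0∞) (l : ℕ → E) (tv : ℕ → ℕ+) (k : ℕ) :
    ℕ → ℝ≥0∞ :=
  stacySurvival (fun s => c (l k) s * F0 (l k) s) (fun s => c (l k) s * survF0 F0 (l k) s)
    (dHist l tv k (l k)) (wHist l tv k (l k))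

def IsUrnPredictive [MeasurableSpace E] (m : E → E → ℝ≥0∞) (c F0 : E → ℕ+ → ℝ≥0∞)
    (μ : Measure (ℕ → E × ℕ+)) : Prop :=
  ∀ (k : ℕ) (l : ℕ → E) (tv : ℕ → ℕ+) (j : E) (t : ℕ),
    μ {ω | (∀ h ≤ k, (ω h).1 = l h) ∧ (∀ h < k, (ω h).2 = tv h) ∧
        t < ((ω k).2 : ℕ) ∧ (ω (k + 1)).1 = j} =
      μ {ω | (∀ h ≤ k, (ω h).1 = l h) ∧ (∀ h < k, (ω h).2 = tv h)} *
        holdSurvival c F0 l tv k t * polyaPredictive m l k j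

lemma tsum_polyaPredictive (m : E → E → ℝ≥0∞) (l : ℕ → E) (k : ℕ)
    (h0 : ∑' e, m (l k) e ≠ 0) (htop : ∑' e, m (l k) e ≠ ⊤) :
    ∑' j, polyaPredictive m l k j = 1 := by
  set s := (range k).filter (fun h => l h = l k)
  have hcard : ∑' j, (((range k).filter (fun h => l h = l k ∧ l (h + 1) = j)).card : ℝ≥0∞) =
      s.card := by
    rw [tsum_eq_sum (s := s.image (fun h => l (h + 1))) fun j hj => ?_]
    · rw [card_eq_sum_card_image (fun h => l (h + 1)) s]
      push_cast
      exact sum_congr rfl fun j _ => by rw [filter_filter]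
    · simp only [mem_image, not_exists, not_and] at hj
      simp only [Nat.cast_eq_zero, card_eq_zero, filter_eq_empty_iff]
      exact fun h hh hlh => hj h (mem_filter.2 ⟨hh, hlh.1⟩) hlh.2
  simp only [polyaPredictive, div_eq_mul_inv, ENNReal.tsum_mul_right, ENNReal.tsum_add, hcard]
  exact ENNReal.mul_inv_cancel (by simp [h0]) (by simp [htop])

namespace IsUrnPredictive

variable [MeasurableSpace E] {m : E → E → ℝ≥0∞} {c F0 : E → ℕ+ → ℝ≥0∞} {μ : Measure (ℕ → E × ℕ+)}

lemma measure_history_inter (hμ : IsUrnPredictive m c F0 μ) (K t : ℕ) (j : E)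
    (ω₀ : ℕ → E × ℕ+) :
    μ (history K ⁻¹' {history K ω₀} ∩ {ω | t < ((ω K).2 : ℕ) ∧ (ω (K + 1)).1 = j}) =
      μ (history K ⁻¹' {history K ω₀}) *
        holdSurvival c F0 (fun h => (ω₀ h).1) (fun h => (ω₀ h).2) K t *
        polyaPredictive m (fun h => (ω₀ h).1) K j := by
  rw [preimage_history_singleton, ← hμ]
  congr 1
  ext ω
  simp [and_assoc]

lemma measure_history_inter_next (hμ : IsUrnPredictive m c F0 μ) (K : ℕ) (j : E)
    (ω₀ : ℕ → E × ℕ+) :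
    μ (history K ⁻¹' {history K ω₀} ∩ {ω | (ω (K + 1)).1 = j}) =
      μ (history K ⁻¹' {history K ω₀}) * polyaPredictive m (fun h => (ω₀ h).1) K j := by
  simpa [holdSurvival, stacySurvival] using hμ.measure_history_inter K 0 j ω₀

variable [MeasurableSingletonClass E] [Countable E]

lemma measure_history_inter_hold_gt (hμ : IsUrnPredictive m c F0 μ) (K t : ℕ)
    (ω₀ : ℕ → E × ℕ+) (hm0 : ∑' e, m (ω₀ K).1 e ≠ 0) (hmtop : ∑' e, m (ω₀ K).1 e ≠ ⊤) :
    μ (history K ⁻¹' {history K ω₀} ∩ {ω | t < ((ω K).2 : ℕ)}) =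
      μ (history K ⁻¹' {history K ω₀}) *
        holdSurvival c F0 (fun h => (ω₀ h).1) (fun h => (ω₀ h).2) K t := by
  rw [measure_eq_tsum_inter_preimage_singleton μ (f := fun ω => (ω (K + 1)).1)
    fun j => (measurable_pi_apply _).fst (measurableSet_singleton j)]
  have hj : ∀ j, μ (history K ⁻¹' {history K ω₀} ∩ {ω | t < ((ω K).2 : ℕ)} ∩
      (fun ω => (ω (K + 1)).1) ⁻¹' {j}) =
        μ (history K ⁻¹' {history K ω₀} ∩ {ω | t < ((ω K).2 : ℕ) ∧ (ω (K + 1)).1 = j}) :=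
    fun j => by rw [Set.inter_assoc]; rfl
  simp only [hj, hμ.measure_history_inter, ENNReal.tsum_mul_left,
    tsum_polyaPredictive m (fun h => (ω₀ h).1) K hm0 hmtop, mul_one]

lemma measure_history_inter_hold_eq [IsFiniteMeasure μ] (hμ : IsUrnPredictive m c F0 μ)
    (K : ℕ) (τ : ℕ+)
    (ω₀ : ℕ → E × ℕ+) (hm0 : ∑' e, m (ω₀ K).1 e ≠ 0) (hmtop : ∑' e, m (ω₀ K).1 e ≠ ⊤) :
    μ (history K ⁻¹' {history K ω₀} ∩ {ω | (ω K).2 = τ}) =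
      μ (history K ⁻¹' {history K ω₀}) *
        (holdSurvival c F0 (fun h => (ω₀ h).1) (fun h => (ω₀ h).2) K ((τ : ℕ) - 1) -
          holdSurvival c F0 (fun h => (ω₀ h).1) (fun h => (ω₀ h).2) K τ) := by
  have hdiff : {ω : ℕ → E × ℕ+ | (ω K).2 = τ} =
      {ω | (τ : ℕ) - 1 < ((ω K).2 : ℕ)} \ {ω | (τ : ℕ) < ((ω K).2 : ℕ)} := by
    ext ω
    simp only [Set.mem_ofPred_eq, Set.mem_sdiff, ← PNat.coe_inj]
    have := (ω K).2.pos
    omega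
  have hmeas : MeasurableSet {ω : ℕ → E × ℕ+ | (τ : ℕ) < ((ω K).2 : ℕ)} :=
    Measurable.snd (f := fun ω : ℕ → E × ℕ+ => ω K) (measurable_pi_apply K)
      (MeasurableSet.of_discrete (s := {x : ℕ+ | (τ : ℕ) < x}))
  have hsub : history K ⁻¹' {history K ω₀} ∩ {ω | (τ : ℕ) < ((ω K).2 : ℕ)} ⊆
      history K ⁻¹' {history K ω₀} ∩ {ω | (τ : ℕ) - 1 < ((ω K).2 : ℕ)} :=
    Set.inter_subset_inter_right _ fun ω (hω : (τ : ℕ) < _) => show (τ : ℕ) - 1 < _ by omega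
  rw [hdiff, Set.inter_sdiff_distrib_left,
    measure_sdiff hsub ((measurableSet_preimage_history K _).inter hmeas).nullMeasurableSet
      (measure_ne_top μ _),
    hμ.measure_history_inter_hold_gt K _ ω₀ hm0 hmtop,
    hμ.measure_history_inter_hold_gt K _ ω₀ hm0 hmtop,
    ENNReal.mul_sub fun _ _ => measure_ne_top μ _]

end IsUrnPredictive

end Predictive

section Visits

variable [DecidableEq E] {i : E} {ω : ℕ → E × ℕ+}

lemma visit_eq_of_count_eq {k n : ℕ} (hk : (ω k).1 = i)
    (hn : Nat.count (fun h => (ω h).1 = i) k = n) : visit i n ω = k := by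
  have hset : {k' | (ω k').1 = i ∧ ((range k').filter (fun h => (ω h).1 = i)).card = n} =
      {k} := by
    ext k'
    simp only [Set.mem_ofPred_eq, Set.mem_singleton_iff, ← Nat.count_eq_card_filter_range]
    exact ⟨fun ⟨hk', hn'⟩ => Nat.count_injective hk' hk (hn'.trans hn.symm),
      by rintro rfl; exact ⟨hk, hn⟩⟩
  rw [visit, hset, csInf_singleton]

lemma visit_spec (hω : {k | (ω k).1 = i}.Infinite) (n : ℕ) :
    (ω (visit i n ω)).1 = i ∧ Nat.count (fun h => (ω h).1 = i) (visit i n ω) = n := by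
  have hp := Nat.nth_mem_of_infinite hω n
  have hc := Nat.count_nth_of_infinite hω n
  rw [visit_eq_of_count_eq hp hc]
  exact ⟨hp, hc⟩

variable {α : Type*}

/-- `ω` is at its visit number `n` (counted from `0`) to `i` at time `K`, and the marks
`g ω h` of its earlier visits `h` to `i` are `a 0, …, a (n - 1)`. -/
def visitPrefix (i : E) (g : (ℕ → E × ℕ+) → ℕ → α) (a : ℕ → α) (n K : ℕ) :
    Set (ℕ → E × ℕ+) :=
  {ω | (ω K).1 = i ∧ Nat.count (fun h => (ω h).1 = i) K = n ∧
    ∀ h < K, (ω h).1 = i → g ω h = a (Nat.count (fun h => (ω h).1 = i) h)}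

lemma mem_visitPrefix_iff (hω : {k | (ω k).1 = i}.Infinite) {g : (ℕ → E × ℕ+) → ℕ → α}
    {a : ℕ → α} {n K : ℕ} :
    ω ∈ visitPrefix i g a n K ↔ (∀ r < n, g ω (visit i r ω) = a r) ∧ visit i n ω = K := by
  constructor
  · rintro ⟨hK, hn, hmarks⟩
    refine ⟨fun r hr => ?_, visit_eq_of_count_eq hK hn⟩
    obtain ⟨hv, hc⟩ := visit_spec hω r
    have hlt : visit i r ω < K := by
      by_contra hle
      have := Nat.count_monotone (fun h => (ω h).1 = i) (not_lt.1 hle)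
      omega
    rw [hmarks _ hlt hv, hc]
  · rintro ⟨hmarks, rfl⟩
    obtain ⟨hv, hc⟩ := visit_spec hω n
    refine ⟨hv, hc, fun h hh hi => ?_⟩
    rw [← hmarks _ (hc ▸ Nat.count_strict_mono hi hh), visit_eq_of_count_eq hi rfl]

lemma visitPrefix_disjoint {g : (ℕ → E × ℕ+) → ℕ → α} {a : ℕ → α} {n K K' : ℕ}
    (h : K ≠ K') : Disjoint (visitPrefix i g a n K) (visitPrefix i g a n K') :=
  Set.disjoint_left.2 fun _ ⟨hK, hn, _⟩ ⟨hK', hn', _⟩ =>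
    h (Nat.count_injective hK hK' (hn.trans hn'.symm))

variable [MeasurableSpace E] {μ : Measure (ℕ → E × ℕ+)} {g : (ℕ → E × ℕ+) → ℕ → α} {a : ℕ → α}

lemma measure_visitMarks_eq_tsum (hrec : ∀ᵐ ω ∂μ, {k | (ω k).1 = i}.Infinite) {n : ℕ}
    (hS : ∀ K, MeasurableSet (visitPrefix i g a n K)) (W : ℕ → Set (ℕ → E × ℕ+))
    (hW : ∀ K, MeasurableSet (W K)) :
    μ {ω | (∀ r < n, g ω (visit i r ω) = a r) ∧ ω ∈ W (visit i n ω)} =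
      ∑' K, μ (visitPrefix i g a n K ∩ W K) := by
  rw [← measure_iUnion (fun K K' h => (visitPrefix_disjoint h).mono Set.inter_subset_left
    Set.inter_subset_left) fun K => (hS K).inter (hW K)]
  refine measure_congr (Filter.eventuallyEq_set.2 (hrec.mono fun ω hω => ?_))
  simp only [Set.mem_ofPred_eq, Set.mem_iUnion, Set.mem_inter_iff, mem_visitPrefix_iff hω]
  exact ⟨fun ⟨hm, hW⟩ => ⟨_, ⟨hm, rfl⟩, hW⟩, fun ⟨_, ⟨hm, hK⟩, hW⟩ => ⟨hm, hK ▸ hW⟩⟩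

lemma measure_visitMarks_eq_prod [IsProbabilityMeasure μ]
    (hrec : ∀ᵐ ω ∂μ, {k | (ω k).1 = i}.Infinite)
    (hS : ∀ n K, MeasurableSet (visitPrefix i g a n K))
    (hg : ∀ n K, MeasurableSet {ω | g ω K = a n}) (q : ℕ → ℝ≥0∞)
    (hq : ∀ n K, μ (visitPrefix i g a n K ∩ {ω | g ω K = a n}) =
      μ (visitPrefix i g a n K) * q n) (n : ℕ) :
    μ {ω | ∀ r < n, g ω (visit i r ω) = a r} = ∏ r ∈ range n, q r := by
  induction n with
  | zero => simp
  | succ n ih =>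
    have hcur := measure_visitMarks_eq_tsum hrec (hS n) (fun _ => Set.univ) fun _ => .univ
    simp only [Set.mem_univ, and_true, Set.inter_univ] at hcur
    simp only [Nat.forall_lt_succ_right, prod_range_succ, ← ih, hcur, ← ENNReal.tsum_mul_right,
      ← hq n]
    exact measure_visitMarks_eq_tsum hrec (hS n) (fun K => {ω | g ω K = a n}) (hg n)

end Visits

section VisitLaws

variable [DecidableEq E] {α : Type*} {i : E} {g : (ℕ → E × ℕ+) → ℕ → α} {a : ℕ → α} {n K : ℕ}

lemma mem_visitPrefix_of_history_eq
    (hg : ∀ ω ω', history K ω = history K ω' → ∀ h < K, g ω h = g ω' h)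
    {ω ω' : ℕ → E × ℕ+} (heq : history K ω = history K ω') (hω : ω ∈ visitPrefix i g a n K) :
    ω' ∈ visitPrefix i g a n K := by
  obtain ⟨hL, hT⟩ := history_eq_history_iff.1 heq
  have hcount : ∀ k ≤ K, Nat.count (fun h => (ω h).1 = i) k =
      Nat.count (fun h => (ω' h).1 = i) k := fun k hk =>
    Nat.count_congr_of_lt fun h hh => by rw [hL h (by omega)]
  obtain ⟨hK, hn, hmarks⟩ := hω
  refine ⟨hL K le_rfl ▸ hK, hcount K le_rfl ▸ hn, fun h hh hi => ?_⟩
  rw [← hg ω ω' heq h hh, ← hcount h hh.le, hmarks h hh (by rw [hL h hh.le, hi])]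

lemma polyaPredictive_of_mem_visitPrefix (m : E → E → ℝ≥0∞) {a : ℕ → E}
    {ω₀ : ℕ → E × ℕ+} (hω₀ : ω₀ ∈ visitPrefix i (fun ω h => (ω (h + 1)).1) a n K) (j : E) :
    polyaPredictive m (fun h => (ω₀ h).1) K j =
      (m i j + Nat.count (fun r => a r = j) n) / (∑' e, m i e + n) := by
  obtain ⟨hK, hn, hmarks⟩ := hω₀
  simp only [polyaPredictive, hK, ← Nat.count_eq_card_filter_range, hn]
  rw [Nat.count_and_eq_count_count (Q := fun h => (ω₀ (h + 1)).1 = j) (R := fun r => a r = j)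
    fun k hk hi => by rw [← hmarks k hk hi], hn]

lemma dHist_wHist_of_mem_visitPrefix {τ : ℕ → ℕ+} {ω₀ : ℕ → E × ℕ+}
    (hω₀ : ω₀ ∈ visitPrefix i (fun ω h => (ω h).2) τ n K) :
    dHist (fun h => (ω₀ h).1) (fun h => (ω₀ h).2) K (ω₀ K).1 =
        (fun s => Nat.count (fun r => τ r = s) n) ∧
      wHist (fun h => (ω₀ h).1) (fun h => (ω₀ h).2) K (ω₀ K).1 =
        (fun s => Nat.count (fun r => s < τ r) n) := by
  obtain ⟨hK, hn, hmarks⟩ := hω₀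
  refine ⟨funext fun s => ?_, funext fun s => ?_⟩ <;>
    simp only [dHist, wHist, hK, ← Nat.count_eq_card_filter_range]
  · rw [Nat.count_and_eq_count_count (Q := fun h => (ω₀ h).2 = s) (R := fun r => τ r = s)
      fun k hk hi => by rw [← hmarks k hk hi], hn]
  · rw [Nat.count_and_eq_count_count (Q := fun h => s < (ω₀ h).2) (R := fun r => s < τ r)
      fun k hk hi => by rw [← hmarks k hk hi], hn]

variable [MeasurableSpace E] [MeasurableSingletonClass E] [Countable E]

lemma measurableSet_visitPrefix
    (hg : ∀ ω ω', history K ω = history K ω' → ∀ h < K, g ω h = g ω' h) :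
    MeasurableSet (visitPrefix i g a n K) := by
  rw [← preimage_image_history fun _ _ => mem_visitPrefix_of_history_eq hg]
  exact measurableSet_preimage_history K _

lemma measure_visitPrefix_inter_eq_mul (μ : Measure (ℕ → E × ℕ+))
    (hg : ∀ ω ω', history K ω = history K ω' → ∀ h < K, g ω h = g ω' h)
    (V : Set (ℕ → E × ℕ+)) (q : ℝ≥0∞)
    (hV : ∀ ω₀ ∈ visitPrefix i g a n K,
      μ (history K ⁻¹' {history K ω₀} ∩ V) = μ (history K ⁻¹' {history K ω₀}) * q) :
    μ (visitPrefix i g a n K ∩ V) = μ (visitPrefix i g a n K) * q := by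
  rw [← preimage_image_history fun _ _ => mem_visitPrefix_of_history_eq hg]
  exact measure_preimage_inter_eq_mul μ (fun y => measurableSet_preimage_history K {y}) _ V q
    fun _ ⟨ω₀, hω₀, hy⟩ => hy ▸ hV ω₀ hω₀

variable {m : E → E → ℝ≥0∞} {c F0 : E → ℕ+ → ℝ≥0∞} {μ : Measure (ℕ → E × ℕ+)}
  [IsProbabilityMeasure μ]

lemma measure_visitNext_eq_prod (hμ : IsUrnPredictive m c F0 μ)
    (hrec : ∀ᵐ ω ∂μ, {k | (ω k).1 = i}.Infinite) (a : ℕ → E) (n : ℕ) :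
    μ {ω | ∀ r < n, visitNext i r ω = a r} =
      ∏ r ∈ range n, (m i (a r) + Nat.count (fun r' => a r' = a r) r) / (∑' e, m i e + r) := by
  have hg : ∀ K (ω ω' : ℕ → E × ℕ+), history K ω = history K ω' →
      ∀ h < K, (ω (h + 1)).1 = (ω' (h + 1)).1 :=
    fun K ω ω' heq h hh => (history_eq_history_iff.1 heq).1 (h + 1) hh
  refine measure_visitMarks_eq_prod (g := fun ω h => (ω (h + 1)).1) hrec
    (fun _ K => measurableSet_visitPrefix (hg K))
    (fun _ _ => (measurable_pi_apply _).fst (measurableSet_singleton _)) _ (fun n K => ?_) n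
  refine measure_visitPrefix_inter_eq_mul μ (hg K) _ _ fun ω₀ hω₀ => ?_
  rw [hμ.measure_history_inter_next, polyaPredictive_of_mem_visitPrefix m hω₀]

lemma measure_visitHold_eq_prod (hμ : IsUrnPredictive m c F0 μ)
    (hrec : ∀ᵐ ω ∂μ, {k | (ω k).1 = i}.Infinite) (hm0 : ∑' e, m i e ≠ 0)
    (hmtop : ∑' e, m i e ≠ ⊤) (τ : ℕ → ℕ+) (n : ℕ) :
    μ {ω | ∀ r < n, visitHold i r ω = τ r} =
      ∏ r ∈ range n, stacyPredictive (fun s => c i s * F0 i s) (fun s => c i s * survF0 F0 i s)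
        (fun s => Nat.count (τ · = s) r) (fun s => Nat.count (s < τ ·) r) (τ r) := by
  have hg : ∀ K (ω ω' : ℕ → E × ℕ+), history K ω = history K ω' →
      ∀ h < K, (ω h).2 = (ω' h).2 :=
    fun K ω ω' heq => (history_eq_history_iff.1 heq).2
  refine measure_visitMarks_eq_prod (g := fun ω h => (ω h).2) hrec
    (fun _ K => measurableSet_visitPrefix (hg K))
    (fun _ _ => (measurable_pi_apply _).snd (measurableSet_singleton _)) _ (fun n K => ?_) n
  refine measure_visitPrefix_inter_eq_mul μ (hg K) _ _ fun ω₀ hω₀ => ?_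
  obtain ⟨hd, hw⟩ := dHist_wHist_of_mem_visitPrefix hω₀
  have hK : (ω₀ K).1 = i := hω₀.1
  rw [hμ.measure_history_inter_hold_eq K _ ω₀ (hK ▸ hm0) (hK ▸ hmtop), holdSurvival, hd, hw, hK]
  rfl

lemma measure_visitNext_fin_eq (hμ : IsUrnPredictive m c F0 μ)
    (hrec : ∀ᵐ ω ∂μ, {k | (ω k).1 = i}.Infinite) (hm0 : ∑' e, m i e ≠ 0) (n : ℕ)
    (jv : Fin n → E) :
    μ {ω | ∀ r : Fin n, visitNext i r ω = jv r} =
      (∏' e, ascFac (m i e) #{r | jv r = e}) / ∏ h ∈ range n, (∑' e, m i e + h) := by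
  obtain ⟨a, rfl⟩ := Fin.exists_eq_comp_val i jv
  have hcount : ∀ e, #{r : Fin n | a r = e} = Nat.count (a · = e) n := fun e =>
    card_filter_univ_fin_eq_count (a · = e) n
  simp only [Fin.forall_iff, hcount]
  rw [measure_visitNext_eq_prod hμ hrec a n, prod_range_add_count_div_eq _ hm0]

lemma measure_visitHold_fin_eq (hμ : IsUrnPredictive m c F0 μ)
    (hrec : ∀ᵐ ω ∂μ, {k | (ω k).1 = i}.Infinite) (hm0 : ∑' e, m i e ≠ 0)
    (hmtop : ∑' e, m i e ≠ ⊤) (hc : ∀ s, 0 < c i s ∧ c i s ≠ ⊤) (hF0 : ∀ s, 0 < F0 i s)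
    (hF0sum : ∑' s, F0 i s = 1) (n : ℕ) (τv : Fin n → ℕ+) :
    μ {ω | ∀ r : Fin n, visitHold i r ω = τv r} =
      ∏' s : ℕ+, stacyLevel (c i s * F0 i s) (c i s * survF0 F0 i s)
        #{r | τv r = s} #{r | s < τv r} := by
  obtain ⟨τ, rfl⟩ := Fin.exists_eq_comp_val 1 τv
  have hcount : ∀ s, #{r : Fin n | τ r = s} = Nat.count (τ · = s) n ∧
      #{r : Fin n | s < τ r} = Nat.count (s < τ ·) n := fun s =>
    ⟨card_filter_univ_fin_eq_count (τ · = s) n, card_filter_univ_fin_eq_count (s < τ ·) n⟩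
  simp only [Fin.forall_iff, hcount]
  rw [measure_visitHold_eq_prod hμ hrec hm0 hmtop,
    prod_stacyPredictive_eq_tprod (fun s => mul_ne_zero (hc s).1.ne' (hF0 s).ne')
      (fun s => ENNReal.mul_ne_top (hc s).2
        (ne_top_of_le_ne_top ENNReal.one_ne_top (hF0sum ▸ ENNReal.le_tsum s)))
      (fun s => ENNReal.mul_ne_top (hc s).2
        (ne_top_of_le_ne_top ENNReal.one_ne_top (survF0_le_one hF0sum s)))]

end VisitLaws

theorem reinforcedUrn_visit_sequences_laws_general
    [Countable E] [DecidableEq E]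
    [MeasurableSpace E] [MeasurableSingletonClass E]
    (m : E → E → ENNReal)
    (hmpos : ∀ i, 0 < ∑' j, m i j) (hmfin : ∀ i, ∑' j, m i j ≠ ⊤)
    (c : E → ℕ+ → ENNReal) (hc : ∀ i s, 0 < c i s ∧ c i s ≠ ⊤)
    (F0 : E → ℕ+ → ENNReal) (hF0 : ∀ i s, 0 < F0 i s) (hF0sum : ∀ i, ∑' s, F0 i s = 1)
    (μ : Measure (ℕ → E × ℕ+)) [IsProbabilityMeasure μ]
    (hstep : ∀ (k : ℕ) (l : ℕ → E) (tv : ℕ → ℕ+) (j : E) (t : ℕ),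
      μ {ω | (∀ h ≤ k, (ω h).1 = l h) ∧ (∀ h < k, (ω h).2 = tv h) ∧
          t < ((ω k).2 : ℕ) ∧ (ω (k + 1)).1 = j} =
        μ {ω | (∀ h ≤ k, (ω h).1 = l h) ∧ (∀ h < k, (ω h).2 = tv h)} *
        (∏ s ∈ Finset.range t,
          (1 - (c (l k) s.succPNat * F0 (l k) s.succPNat +
                dHist l tv k (l k) s.succPNat) /
            (c (l k) s.succPNat * (F0 (l k) s.succPNat + survF0 F0 (l k) s.succPNat) +
              dHist l tv k (l k) s.succPNat + wHist l tv k (l k) s.succPNat))) *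
        ((m (l k) j +
            ((Finset.range k).filter (fun h => l h = l k ∧ l (h + 1) = j)).card) /
          ((∑' e, m (l k) e) + ((Finset.range k).filter (fun h => l h = l k)).card)))
    (hrec : μ {ω | ∀ i : E, {k : ℕ | (ω k).1 = i}.Infinite} = 1) :
    (∀ (i : E) (n : ℕ) (jv : Fin n → E),
      μ {ω | ∀ r : Fin n, visitNext i (r : ℕ) ω = jv r} =
        (∏' e : E,
            ∏ h ∈ Finset.range ((Finset.univ.filter (fun r : Fin n => jv r = e)).card),
              (m i e + h)) /
          ∏ h ∈ Finset.range n, ((∑' e, m i e) + h)) ∧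
    (∀ (i : E) (n : ℕ) (τv : Fin n → ℕ+),
      μ {ω | ∀ r : Fin n, visitHold i (r : ℕ) ω = τv r} =
        ∏' s : ℕ+,
          (ascFac (c i s * F0 i s)
              ((Finset.univ.filter (fun r : Fin n => τv r = s)).card) *
            ascFac (c i s * survF0 F0 i s)
              ((Finset.univ.filter (fun r : Fin n => s < τv r)).card) /
            ascFac (c i s * F0 i s + c i s * survF0 F0 i s)
              ((Finset.univ.filter (fun r : Fin n => τv r = s)).card +
                (Finset.univ.filter (fun r : Fin n => s < τv r)).card))) ∧
    (∀ (i : E) (n : ℕ) (jv : Fin n → E) (σ : Equiv.Perm (Fin n)),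
      μ {ω | ∀ r : Fin n, visitNext i (r : ℕ) ω = jv r} =
        μ {ω | ∀ r : Fin n, visitNext i (r : ℕ) ω = jv (σ r)}) ∧
    (∀ (i : E) (n : ℕ) (τv : Fin n → ℕ+) (σ : Equiv.Perm (Fin n)),
      μ {ω | ∀ r : Fin n, visitHold i (r : ℕ) ω = τv r} =
        μ {ω | ∀ r : Fin n, visitHold i (r : ℕ) ω = τv (σ r)}) := by
  have hμ : IsUrnPredictive m c F0 μ := fun k l tv j t => by
    rw [hstep]
    simp only [holdSurvival, stacySurvival, stacyHazard, polyaPredictive, mul_add]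
  have hvisits : ∀ i, ∀ᵐ ω ∂μ, {k | (ω k).1 = i}.Infinite := fun i =>
    ((ae_iff_measure_eq measurableSet_recurrent.nullMeasurableSet).2
      (hrec.trans measure_univ.symm)).mono fun ω hω => hω i
  have polya := fun i => measure_visitNext_fin_eq hμ (hvisits i) (hmpos i).ne'
  have stacy := fun i => measure_visitHold_fin_eq hμ (hvisits i) (hmpos i).ne' (hmfin i)
    (hc i) (hF0 i) (hF0sum i)
  refine ⟨polya, stacy, fun i n jv σ => ?_, fun i n τv σ => ?_⟩
  · have hcount : ∀ e, #{r | jv (σ r) = e} = #{r | jv r = e} := fun e =>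
      card_filter_comp_perm σ (jv · = e)
    simp only [polya, hcount]
  · have hcount : ∀ s, #{r | τv (σ r) = s} = #{r | τv r = s} ∧
        #{r | s < τv (σ r)} = #{r | s < τv r} := fun s =>
      ⟨card_filter_comp_perm σ (τv · = s), card_filter_comp_perm σ (s < τv ·)⟩
    simp only [stacy, hcount]

/-- **Lemma 1, parts 3–4.**  If the reinforced urn process is recurrent,
then for each `i ∈ E` the subsequence `(L_{i,n})_{n≥1}` has the law of the generalized
Pólya urn sequence with initial composition `m^i`, and `(T_{i,n})_{n≥1}` has the law of
the beta-Stacy urn system with parameters `(c^i, F0^i)`; in particular both sequences are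
exchangeable (their finite-dimensional laws are invariant under permutations). -/
theorem reinforcedUrn_visit_sequences_laws
    [Nonempty E] [Countable E] [DecidableEq E]
    [MeasurableSpace E] [MeasurableSingletonClass E]
    (m : E → E → ENNReal) (hmii : ∀ i, m i i = 0)
    (hmpos : ∀ i, 0 < ∑' j, m i j) (hmfin : ∀ i, ∑' j, m i j ≠ ⊤)
    (c : E → ℕ+ → ENNReal) (hc : ∀ i s, 0 < c i s ∧ c i s ≠ ⊤)
    (F0 : E → ℕ+ → ENNReal) (hF0 : ∀ i s, 0 < F0 i s) (hF0sum : ∀ i, ∑' s, F0 i s = 1)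
    (l₀ : E) (μ : Measure (ℕ → E × ℕ+)) [IsProbabilityMeasure μ]
    (h0 : μ {ω | (ω 0).1 = l₀} = 1)
    (hstep : ∀ (k : ℕ) (l : ℕ → E) (tv : ℕ → ℕ+) (j : E) (t : ℕ),
      μ {ω | (∀ h ≤ k, (ω h).1 = l h) ∧ (∀ h < k, (ω h).2 = tv h) ∧
          t < ((ω k).2 : ℕ) ∧ (ω (k + 1)).1 = j} =
        μ {ω | (∀ h ≤ k, (ω h).1 = l h) ∧ (∀ h < k, (ω h).2 = tv h)} *
        (∏ s ∈ Finset.range t,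
          (1 - (c (l k) s.succPNat * F0 (l k) s.succPNat +
                dHist l tv k (l k) s.succPNat) /
            (c (l k) s.succPNat * (F0 (l k) s.succPNat + survF0 F0 (l k) s.succPNat) +
              dHist l tv k (l k) s.succPNat + wHist l tv k (l k) s.succPNat))) *
        ((m (l k) j +
            ((Finset.range k).filter (fun h => l h = l k ∧ l (h + 1) = j)).card) /
          ((∑' e, m (l k) e) + ((Finset.range k).filter (fun h => l h = l k)).card)))
    (hrec : μ {ω | ∀ i : E, {k : ℕ | (ω k).1 = i}.Infinite} = 1) :
    (∀ (i : E) (n : ℕ) (jv : Fin n → E),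
      μ {ω | ∀ r : Fin n, visitNext i (r : ℕ) ω = jv r} =
        (∏' e : E,
            ∏ h ∈ Finset.range ((Finset.univ.filter (fun r : Fin n => jv r = e)).card),
              (m i e + h)) /
          ∏ h ∈ Finset.range n, ((∑' e, m i e) + h)) ∧
    (∀ (i : E) (n : ℕ) (τv : Fin n → ℕ+),
      μ {ω | ∀ r : Fin n, visitHold i (r : ℕ) ω = τv r} =
        ∏' s : ℕ+,
          (ascFac (c i s * F0 i s)
              ((Finset.univ.filter (fun r : Fin n => τv r = s)).card) *
            ascFac (c i s * survF0 F0 i s)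
              ((Finset.univ.filter (fun r : Fin n => s < τv r)).card) /
            ascFac (c i s * F0 i s + c i s * survF0 F0 i s)
              ((Finset.univ.filter (fun r : Fin n => τv r = s)).card +
                (Finset.univ.filter (fun r : Fin n => s < τv r)).card))) ∧
    (∀ (i : E) (n : ℕ) (jv : Fin n → E) (σ : Equiv.Perm (Fin n)),
      μ {ω | ∀ r : Fin n, visitNext i (r : ℕ) ω = jv r} =
        μ {ω | ∀ r : Fin n, visitNext i (r : ℕ) ω = jv (σ r)}) ∧
    (∀ (i : E) (n : ℕ) (τv : Fin n → ℕ+) (σ : Equiv.Perm (Fin n)),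
      μ {ω | ∀ r : Fin n, visitHold i (r : ℕ) ω = τv r} =
        μ {ω | ∀ r : Fin n, visitHold i (r : ℕ) ω = τv (σ r)}) :=
  reinforcedUrn_visit_sequences_laws_general m hmpos hmfin c hc F0 hF0 hF0sum μ hstep hrec
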